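/- A smooth differential k-form ω on a convex open subset of ℝⁿ with dω = 0 and 1 ≤ k is exact: there exists a (k−1)-form η with dη = ω. -/

import Mathlib

open scoped BigOperators

noncomputable section

/-- Differential `k`-forms on `ℝⁿ`: alternating-map valued functions. -/
abbrev DForm (n k : ℕ) := (Fin n → ℝ) → ((Fin n → ℝ) [⋀^Fin k]→ₗ[ℝ] ℝ)

/-- The underlying value function of a form. -/
def fval {n k : ℕ} (ω : DForm n k) : (Fin n → ℝ) → (Fin k → (Fin n → ℝ)) → ℝ :=
  fun x v => ω x v

/-- Exterior derivative, given by the standard value formula. -/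
def dOp {n k : ℕ} (ω : (Fin n → ℝ) → (Fin k → (Fin n → ℝ)) → ℝ) :
    (Fin n → ℝ) → (Fin (k + 1) → (Fin n → ℝ)) → ℝ :=
  fun x v => ∑ i : Fin (k + 1), (-1 : ℝ) ^ (i : ℕ) *
    fderiv ℝ (fun y => ω y (v ∘ i.succAbove)) x (v i)

/-!
On a domain star-shaped about `c`, the cone construction
`η_x(w) = ∫₀¹ tᵐ ω_{c + t(x - c)}(x - c, w) dt`
inverts `d` on closed forms. Differentiating under the integral sign, `dη_x(v)` is the integral
of `∑ᵢ (-1)ⁱ (tᵐ⁺¹ ∂_{vᵢ}ω(x - c, v̂ᵢ) + tᵐ ω(vᵢ, v̂ᵢ))` along the segment. Closedness of `ω`,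
evaluated on `(x - c, v)`, turns the first sum into `tᵐ⁺¹ ∂_{x - c}ω(v)`, and the alternating
property turns the second into `(m + 1) tᵐ ω(v)`. Together they form the derivative of
`t ↦ tᵐ⁺¹ ω_{c + t(x - c)}(v)`, whose integral over `[0, 1]` is `ω_x(v)`. Smoothness of `η` is
differentiation under the integral sign, iterated.
-/

open MeasureTheory Metric Set
open scoped Interval Topology

theorem exists_closedBall_prod_subset_of_isCompact {X Y : Type*} [PseudoMetricSpace X]
    [TopologicalSpace Y] {V : Set (X × Y)} (hV : IsOpen V) {K : Set Y} (hK : IsCompact K)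
    {x₀ : X} (hx₀ : {x₀} ×ˢ K ⊆ V) : ∃ ε > 0, closedBall x₀ ε ×ˢ K ⊆ V := by
  obtain ⟨U, W, hU, -, hx₀U, hKW, hUW⟩ := generalized_tube_lemma isCompact_singleton hK hV hx₀
  obtain ⟨ε, hε, hεU⟩ := nhds_basis_closedBall.mem_iff.1 (hU.mem_nhds (hx₀U rfl))
  exact ⟨ε, hε, (prod_mono hεU hKW).trans hUW⟩

section ParametricIntervalIntegral

variable {E G : Type*} [NormedAddCommGroup E] [NormedSpace ℝ E]
  [NormedAddCommGroup G] [NormedSpace ℝ G]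
  {F : E → ℝ → G} {V : Set (E × ℝ)} {a b : ℝ}

theorem ContDiffOn.hasFDerivAt_uncurry_left (hV : IsOpen V)
    (hF : ContDiffOn ℝ 1 (Function.uncurry F) V) {x : E} {t : ℝ} (hxt : (x, t) ∈ V) :
    HasFDerivAt (F · t) ((fderiv ℝ (Function.uncurry F) (x, t)).comp
      (ContinuousLinearMap.inl ℝ E ℝ)) x := by
  have hFxt := ((hF.differentiableOn one_ne_zero).differentiableAt (hV.mem_nhds hxt)).hasFDerivAt
  have hmk : HasFDerivAt (fun y : E => (y, t)) (ContinuousLinearMap.inl ℝ E ℝ) x :=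
    hasFDerivAt_prodMk_left x t
  exact hFxt.comp x hmk

theorem ContDiffOn.contDiffOn_uncurry_fderiv_left (hV : IsOpen V) {k : ℕ}
    (hF : ContDiffOn ℝ (k + 1) (Function.uncurry F) V) :
    ContDiffOn ℝ k (Function.uncurry fun x t => fderiv ℝ (F · t) x) V := by
  have hF1 : ContDiffOn ℝ 1 (Function.uncurry F) V := hF.of_le le_add_self
  refine ((hF.fderiv_of_isOpen hV le_rfl).clm_comp
    (contDiffOn_const (c := ContinuousLinearMap.inl ℝ E ℝ))).congr fun p hp => ?_
  exact (hF1.hasFDerivAt_uncurry_left hV hp).fderiv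

theorem continuousOn_intervalIntegral_of_continuousOn [FiniteDimensional ℝ E]
    (hV : IsOpen V) (hF : ContinuousOn (Function.uncurry F) V) {U : Set E}
    (hUV : U ×ˢ uIcc a b ⊆ V) : ContinuousOn (fun x => ∫ t in a..b, F x t) U := by
  intro x₀ hx₀
  obtain ⟨ε, hε, hεV⟩ := exists_closedBall_prod_subset_of_isCompact hV isCompact_uIcc
    ((prod_mono (singleton_subset_iff.2 hx₀) subset_rfl).trans hUV)
  obtain ⟨C, hC⟩ := ((isCompact_closedBall x₀ ε).prod isCompact_uIcc).exists_bound_of_continuousOn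
    (hF.mono hεV)
  have hslice : ∀ x ∈ closedBall x₀ ε, ContinuousOn (F x) (uIcc a b) := fun x hx =>
    hF.comp (Continuous.prodMk_right x).continuousOn fun t ht => hεV ⟨hx, ht⟩
  refine (intervalIntegral.continuousAt_of_dominated_interval (bound := fun _ => C) ?_ ?_
    intervalIntegrable_const ?_).continuousWithinAt
  · filter_upwards [closedBall_mem_nhds x₀ hε] with x hx
    exact ((hslice x hx).mono uIoc_subset_uIcc).aestronglyMeasurable measurableSet_uIoc
  · filter_upwards [closedBall_mem_nhds x₀ hε] with x hx
    exact Filter.Eventually.of_forall fun t ht => hC (x, t) ⟨hx, uIoc_subset_uIcc ht⟩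
  · refine Filter.Eventually.of_forall fun t ht => ?_
    have hV₀ : (x₀, t) ∈ V := hεV ⟨mem_closedBall_self hε.le, uIoc_subset_uIcc ht⟩
    exact ContinuousAt.comp (f := (·, t)) (hF.continuousAt (hV.mem_nhds hV₀))
      (Continuous.prodMk_left t).continuousAt

theorem hasFDerivAt_intervalIntegral_of_contDiffOn [FiniteDimensional ℝ E] [CompleteSpace G]
    (hV : IsOpen V) (hF : ContDiffOn ℝ 1 (Function.uncurry F) V) {x₀ : E}
    (hx₀ : {x₀} ×ˢ uIcc a b ⊆ V) :
    HasFDerivAt (fun x => ∫ t in a..b, F x t) (∫ t in a..b, fderiv ℝ (F · t) x₀) x₀ := by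
  obtain ⟨ε, hε, hεV⟩ := exists_closedBall_prod_subset_of_isCompact hV isCompact_uIcc hx₀
  have hF' : ContinuousOn (Function.uncurry fun x t => fderiv ℝ (F · t) x) V :=
    (hF.contDiffOn_uncurry_fderiv_left (k := 0) hV).continuousOn
  obtain ⟨C, hC⟩ := ((isCompact_closedBall x₀ ε).prod isCompact_uIcc).exists_bound_of_continuousOn
    (hF'.mono hεV)
  have hball : ∀ x ∈ ball x₀ ε, ∀ t ∈ Ι a b, (x, t) ∈ V := fun x hx t ht =>
    hεV ⟨ball_subset_closedBall hx, uIoc_subset_uIcc ht⟩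
  have hslice : ∀ x ∈ closedBall x₀ ε, ContinuousOn (F x) (uIcc a b) := fun x hx =>
    hF.continuousOn.comp (Continuous.prodMk_right x).continuousOn fun t ht => hεV ⟨hx, ht⟩
  refine intervalIntegral.hasFDerivAt_integral_of_dominated_of_fderiv_le (μ := volume)
    (F' := fun x t => fderiv ℝ (F · t) x) (bound := fun _ => C) (ball_mem_nhds x₀ hε)
    ?_ ?_ ?_ ?_ intervalIntegrable_const ?_
  · filter_upwards [ball_mem_nhds x₀ hε] with x hx
    exact ((hslice x (ball_subset_closedBall hx)).mono uIoc_subset_uIcc).aestronglyMeasurable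
      measurableSet_uIoc
  · exact (hslice x₀ (mem_closedBall_self hε.le)).intervalIntegrable
  · exact ((hF'.comp (Continuous.prodMk_right x₀).continuousOn fun t ht =>
      hx₀ ⟨rfl, ht⟩).mono uIoc_subset_uIcc).aestronglyMeasurable measurableSet_uIoc
  · exact Filter.Eventually.of_forall fun t ht x hx =>
      hC (x, t) ⟨ball_subset_closedBall hx, uIoc_subset_uIcc ht⟩
  · refine Filter.Eventually.of_forall fun t ht x hx => ?_
    exact ((hF.hasFDerivAt_uncurry_left hV (hball x hx t ht)).differentiableAt).hasFDerivAt

theorem fderiv_intervalIntegral_apply [FiniteDimensional ℝ E] [CompleteSpace G]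
    (hV : IsOpen V) (hF : ContDiffOn ℝ 1 (Function.uncurry F) V) {x₀ : E}
    (hx₀ : {x₀} ×ˢ uIcc a b ⊆ V) (h : E) :
    fderiv ℝ (fun x => ∫ t in a..b, F x t) x₀ h = ∫ t in a..b, fderiv ℝ (F · t) x₀ h := by
  have hF' : ContinuousOn (fun t => fderiv ℝ (F · t) x₀) (uIcc a b) :=
    (hF.contDiffOn_uncurry_fderiv_left (k := 0) hV).continuousOn.comp
      (Continuous.prodMk_right x₀).continuousOn fun t ht => hx₀ ⟨rfl, ht⟩
  rw [(hasFDerivAt_intervalIntegral_of_contDiffOn hV hF hx₀).fderiv,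
    ContinuousLinearMap.intervalIntegral_apply hF'.intervalIntegrable]

theorem contDiffOn_intervalIntegral [FiniteDimensional ℝ E] [CompleteSpace G] (k : ℕ)
    (hV : IsOpen V) (hF : ContDiffOn ℝ k (Function.uncurry F) V) {U : Set E} (hU : IsOpen U)
    (hUV : U ×ˢ uIcc a b ⊆ V) : ContDiffOn ℝ k (fun x => ∫ t in a..b, F x t) U := by
  induction k generalizing F with
  | zero => exact contDiffOn_zero.2 (continuousOn_intervalIntegral_of_continuousOn hV
      (contDiffOn_zero.1 hF) hUV)
  | succ k ih =>
    rw [Nat.cast_add_one] at hF ⊢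
    have hF1 : ContDiffOn ℝ 1 (Function.uncurry F) V := hF.one_of_succ
    have hslice : ∀ x ∈ U, {x} ×ˢ uIcc a b ⊆ V := fun x hx =>
      (prod_mono (singleton_subset_iff.2 hx) subset_rfl).trans hUV
    rw [contDiffOn_succ_iff_fderiv_apply hU.uniqueDiffOn]
    refine ⟨fun x hx => (hasFDerivAt_intervalIntegral_of_contDiffOn hV hF1 (hslice x hx)
      ).differentiableAt.differentiableWithinAt, by simp, fun h => ?_⟩
    have hF' : ContDiffOn ℝ k (Function.uncurry fun x t => fderiv ℝ (F · t) x h) V :=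
      (hF.contDiffOn_uncurry_fderiv_left hV).clm_apply contDiffOn_const
    refine (ih hF').congr fun x hx => ?_
    rw [fderivWithin_of_isOpen hU hx, fderiv_intervalIntegral_apply hV hF1 (hslice x hx)]

end ParametricIntervalIntegral

theorem StarConvex.prod_uIcc_subset_preimage {E : Type*} [AddCommGroup E] [Module ℝ E]
    {c : E} {Ω : Set E} (hΩ : StarConvex ℝ c Ω) :
    Ω ×ˢ uIcc (0 : ℝ) 1 ⊆ (fun p : E × ℝ => c + p.2 • (p.1 - c)) ⁻¹' Ω := by
  rintro ⟨x, t⟩ ⟨hx, ht⟩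
  rw [uIcc_of_le zero_le_one] at ht
  exact hΩ.add_smul_sub_mem hx ht.1 ht.2

theorem ContinuousOn.comp_add_smul_sub {E X : Type*} [NormedAddCommGroup E] [NormedSpace ℝ E]
    [TopologicalSpace X] {c x : E} {Ω : Set E} {f : E → X} (hf : ContinuousOn f Ω)
    (hΩ : StarConvex ℝ c Ω) (hx : x ∈ Ω) :
    ContinuousOn (fun t : ℝ => f (c + t • (x - c))) (uIcc 0 1) :=
  hf.comp (by fun_prop) fun t ht => hΩ.prod_uIcc_subset_preimage (mk_mem_prod hx ht)

theorem integral_pow_mul_fderiv_add_eq {E : Type*} [NormedAddCommGroup E] [NormedSpace ℝ E]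
    {f : E → ℝ} {c x : E} {Ω : Set E} (hΩo : IsOpen Ω) (hΩ : StarConvex ℝ c Ω)
    (hf : ContDiffOn ℝ 1 f Ω) (hx : x ∈ Ω) (m : ℕ) :
    ∫ t in (0 : ℝ)..1, (t ^ (m + 1) * fderiv ℝ f (c + t • (x - c)) (x - c) +
      (m + 1) * t ^ m * f (c + t • (x - c))) = f x := by
  have hderiv : ∀ t ∈ uIcc (0 : ℝ) 1, HasDerivAt (fun s : ℝ => s ^ (m + 1) * f (c + s • (x - c)))
      (t ^ (m + 1) * fderiv ℝ f (c + t • (x - c)) (x - c) +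
        (m + 1) * t ^ m * f (c + t • (x - c))) t := by
    intro t ht
    have hγ : c + t • (x - c) ∈ Ω := hΩ.prod_uIcc_subset_preimage (mk_mem_prod hx ht)
    have hft : HasFDerivAt f (fderiv ℝ f (c + t • (x - c))) (c + t • (x - c)) :=
      ((hf.differentiableOn one_ne_zero).differentiableAt (hΩo.mem_nhds hγ)).hasFDerivAt
    have hpath : HasDerivAt (fun s : ℝ => c + s • (x - c)) (x - c) t := by
      simpa using ((hasDerivAt_id t).smul_const (x - c)).const_add c
    refine ((hasDerivAt_pow (m + 1) t).mul (hft.comp_hasDerivAt t hpath)).congr_deriv ?_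
    simp only [Function.comp_apply, Nat.add_sub_cancel, Nat.cast_add, Nat.cast_one]
    ring
  have hcont : ContinuousOn (fun t : ℝ => t ^ (m + 1) * fderiv ℝ f (c + t • (x - c)) (x - c) +
      (m + 1) * t ^ m * f (c + t • (x - c))) (uIcc 0 1) :=
    (continuousOn_pow _).mul (((hf.continuousOn_fderiv_of_isOpen hΩo le_rfl).clm_apply
      continuousOn_const).comp_add_smul_sub hΩ hx) |>.add <|
      (continuousOn_const.mul (continuousOn_pow _)).mul (hf.continuousOn.comp_add_smul_sub hΩ hx)
  rw [intervalIntegral.integral_eq_sub_of_hasDerivAt hderiv hcont.intervalIntegrable]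
  simp

section IntervalIntegralAlternating

variable {M N ι : Type*} [AddCommGroup M] [Module ℝ M] [NormedAddCommGroup N] [NormedSpace ℝ N]

open Classical in
def AlternatingMap.intervalIntegral (f : ℝ → M [⋀^ι]→ₗ[ℝ] N) (a b : ℝ) : M [⋀^ι]→ₗ[ℝ] N :=
  if h : ∀ v, IntervalIntegrable (fun t => f t v) volume a b then
    { toFun := fun v => ∫ t in a..b, f t v
      map_update_add' := fun v i x y => by
        simp only [AlternatingMap.map_update_add]
        exact intervalIntegral.integral_add (h _) (h _)
      map_update_smul' := fun v i r x => by
        simp only [AlternatingMap.map_update_smul]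
        exact intervalIntegral.integral_smul r _
      map_eq_zero_of_eq' := fun v i j hv hij => by
        simp [AlternatingMap.map_eq_zero_of_eq _ v hv hij] }
  else 0

theorem AlternatingMap.intervalIntegral_apply {f : ℝ → M [⋀^ι]→ₗ[ℝ] N} {a b : ℝ}
    (hf : ∀ v, IntervalIntegrable (fun t => f t v) volume a b) (v : ι → M) :
    AlternatingMap.intervalIntegral f a b v = ∫ t in a..b, f t v := by
  rw [AlternatingMap.intervalIntegral, dif_pos hf]
  rfl

end IntervalIntegralAlternating

theorem AlternatingMap.sum_neg_one_pow_smul_map_cons_removeNth {R M N : Type*} [CommRing R]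
    [AddCommGroup M] [Module R M] [AddCommGroup N] [Module R N] {m : ℕ}
    (A : M [⋀^Fin (m + 1)]→ₗ[R] N) (v : Fin (m + 1) → M) :
    ∑ i : Fin (m + 1), (-1 : ℤ) ^ (i : ℕ) • A (Fin.cons (v i) (i.removeNth v)) = (m + 1) • A v := by
  have h := congr($(A.alternatizeUncurryFin_curryLeft) v)
  rw [AlternatingMap.alternatizeUncurryFin_apply] at h
  exact h

theorem dOp_cons {n k : ℕ} (f : (Fin n → ℝ) → (Fin (k + 1) → Fin n → ℝ) → ℝ) (x u : Fin n → ℝ)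
    (v : Fin (k + 1) → Fin n → ℝ) :
    dOp f x (Fin.cons u v) = fderiv ℝ (f · v) x u -
      ∑ i : Fin (k + 1), (-1) ^ (i : ℕ) * fderiv ℝ (f · (Fin.cons u (i.removeNth v))) x (v i) := by
  rw [dOp, Fin.sum_univ_succ]
  simp [pow_succ, sub_eq_add_neg, ← Finset.sum_neg_distrib, add_comm]

section Forms

variable {n m : ℕ} {c x : Fin n → ℝ} {Ω : Set (Fin n → ℝ)} {ω : DForm n (m + 1)}

theorem sum_neg_one_pow_mul_eq_of_dOp_cons_eq_zero {y u : Fin n → ℝ}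
    {v : Fin (m + 1) → Fin n → ℝ} (hy : dOp (fval ω) y (Fin.cons u v) = 0) (s r : ℝ) :
    ∑ i : Fin (m + 1), (-1) ^ (i : ℕ) *
        (s * fderiv ℝ (fun z => fval ω z (Fin.cons u (i.removeNth v))) y (v i) +
          r * fval ω y (Fin.cons (v i) (i.removeNth v))) =
      s * fderiv ℝ (fun z => fval ω z v) y u + (m + 1) * r * fval ω y v := by
  have hd : ∑ i : Fin (m + 1), (-1) ^ (i : ℕ) *
      fderiv ℝ (fun z => fval ω z (Fin.cons u (i.removeNth v))) y (v i) =
        fderiv ℝ (fun z => fval ω z v) y u := by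
    rw [dOp_cons] at hy
    linarith
  have ha : ∑ i : Fin (m + 1), (-1) ^ (i : ℕ) * fval ω y (Fin.cons (v i) (i.removeNth v)) =
      (m + 1) * fval ω y v := by
    simpa [fval, zsmul_eq_mul] using (ω y).sum_neg_one_pow_smul_map_cons_removeNth v
  calc _ = s * ∑ i : Fin (m + 1), (-1) ^ (i : ℕ) *
          fderiv ℝ (fun z => fval ω z (Fin.cons u (i.removeNth v))) y (v i) +
        r * ∑ i : Fin (m + 1), (-1) ^ (i : ℕ) * fval ω y (Fin.cons (v i) (i.removeNth v)) := by
        simp only [Finset.mul_sum, ← Finset.sum_add_distrib]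
        exact Finset.sum_congr rfl fun i _ => by ring
    _ = _ := by rw [hd, ha]; ring

def DForm.interiorCLM (ω : DForm n (m + 1)) (w : Fin m → Fin n → ℝ) (y : Fin n → ℝ) :
    (Fin n → ℝ) →L[ℝ] ℝ :=
  LinearMap.toContinuousLinearMap ((ω y).toMultilinearMap.toLinearMap (Fin.cons 0 w) 0)

@[simp]
theorem DForm.interiorCLM_apply (w : Fin m → Fin n → ℝ) (y u : Fin n → ℝ) :
    ω.interiorCLM w y u = fval ω y (Fin.cons u w) := by
  simp [DForm.interiorCLM, fval, Fin.update_cons_zero]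

theorem DForm.contDiffOn_interiorCLM {k : WithTop ℕ∞}
    (hω : ∀ v, ContDiffOn ℝ k (fun x => fval ω x v) Ω) (w : Fin m → Fin n → ℝ) :
    ContDiffOn ℝ k (ω.interiorCLM w) Ω :=
  contDiffOn_clm_apply.2 fun u => by simpa using hω (Fin.cons u w)

theorem DForm.fderiv_interiorCLM_apply {w : Fin m → Fin n → ℝ} {y : Fin n → ℝ}
    (hω : DifferentiableAt ℝ (ω.interiorCLM w) y) (h u : Fin n → ℝ) :
    fderiv ℝ (ω.interiorCLM w) y h u = fderiv ℝ (fun z => fval ω z (Fin.cons u w)) y h := by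
  have hu := hω.hasFDerivAt.clm_apply (hasFDerivAt_const u y)
  simp only [DForm.interiorCLM_apply] at hu
  simp [hu.fderiv]

def homotopyOperator (c : Fin n → ℝ) (ω : DForm n (m + 1)) : DForm n m := fun x =>
  AlternatingMap.intervalIntegral (fun t => t ^ m • (ω (c + t • (x - c))).curryLeft (x - c)) 0 1

def homotopyIntegrand (c : Fin n → ℝ) (ω : DForm n (m + 1)) (w : Fin m → Fin n → ℝ)
    (x : Fin n → ℝ) (t : ℝ) : ℝ :=
  t ^ m * ω.interiorCLM w (c + t • (x - c)) (x - c)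

theorem fval_homotopyOperator (hΩ : StarConvex ℝ c Ω)
    (hω : ∀ v, ContinuousOn (fun x => fval ω x v) Ω) (hx : x ∈ Ω) (w : Fin m → Fin n → ℝ) :
    fval (homotopyOperator c ω) x w = ∫ t in (0 : ℝ)..1, homotopyIntegrand c ω w x t := by
  have hint : ∀ w : Fin m → Fin n → ℝ, IntervalIntegrable
      (fun t : ℝ => t ^ m * fval ω (c + t • (x - c)) (Fin.cons (x - c) w)) volume 0 1 :=
    fun w => ((continuous_pow m).continuousOn.mul
      ((hω _).comp_add_smul_sub hΩ hx)).intervalIntegrable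
  simp only [homotopyIntegrand, DForm.interiorCLM_apply]
  exact AlternatingMap.intervalIntegral_apply
    (f := fun t => t ^ m • (ω (c + t • (x - c))).curryLeft (x - c)) hint w

theorem contDiffOn_uncurry_homotopyIntegrand {k : WithTop ℕ∞}
    (hω : ∀ v, ContDiffOn ℝ k (fun x => fval ω x v) Ω) (w : Fin m → Fin n → ℝ) :
    ContDiffOn ℝ k (Function.uncurry (homotopyIntegrand c ω w))
      ((fun p : (Fin n → ℝ) × ℝ => c + p.2 • (p.1 - c)) ⁻¹' Ω) := by
  have hγ : ContDiff ℝ k fun p : (Fin n → ℝ) × ℝ => c + p.2 • (p.1 - c) := by fun_prop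
  have hsub : ContDiff ℝ k fun p : (Fin n → ℝ) × ℝ => p.1 - c := by fun_prop
  exact (contDiff_snd.pow m).contDiffOn.mul
    (((ω.contDiffOn_interiorCLM hω w).comp hγ.contDiffOn fun _ hp => hp).clm_apply
      hsub.contDiffOn)

theorem contDiffOn_homotopyOperator (hΩo : IsOpen Ω) (hΩ : StarConvex ℝ c Ω) (k : ℕ)
    (hω : ∀ v, ContDiffOn ℝ k (fun x => fval ω x v) Ω) (w : Fin m → Fin n → ℝ) :
    ContDiffOn ℝ k (fun x => fval (homotopyOperator c ω) x w) Ω :=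
  (contDiffOn_intervalIntegral k (hΩo.preimage (by fun_prop))
    (contDiffOn_uncurry_homotopyIntegrand hω w) hΩo hΩ.prod_uIcc_subset_preimage).congr
    fun _ hx => fval_homotopyOperator hΩ (fun v => (hω v).continuousOn) hx w

theorem fderiv_fval_homotopyOperator_apply (hΩo : IsOpen Ω) (hΩ : StarConvex ℝ c Ω)
    (hω : ∀ v, ContDiffOn ℝ 1 (fun x => fval ω x v) Ω) (hx : x ∈ Ω) (w : Fin m → Fin n → ℝ)
    (h : Fin n → ℝ) :
    fderiv ℝ (fun y => fval (homotopyOperator c ω) y w) x h =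
      ∫ t in (0 : ℝ)..1,
        (t ^ (m + 1) * fderiv ℝ (fun y => fval ω y (Fin.cons (x - c) w)) (c + t • (x - c)) h +
          t ^ m * fval ω (c + t • (x - c)) (Fin.cons h w)) := by
  have hslice : {x} ×ˢ uIcc (0 : ℝ) 1 ⊆ (fun p : (Fin n → ℝ) × ℝ => c + p.2 • (p.1 - c)) ⁻¹' Ω :=
    (prod_mono (singleton_subset_iff.2 hx) subset_rfl).trans hΩ.prod_uIcc_subset_preimage
  have hη : (fun y => fval (homotopyOperator c ω) y w) =ᶠ[𝓝 x]
      fun y => ∫ t in (0 : ℝ)..1, homotopyIntegrand c ω w y t :=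
    Filter.eventuallyEq_of_mem (hΩo.mem_nhds hx) fun y hy =>
      fval_homotopyOperator hΩ (fun v => (hω v).continuousOn) hy w
  rw [hη.fderiv_eq, fderiv_intervalIntegral_apply (hΩo.preimage (by fun_prop))
    (contDiffOn_uncurry_homotopyIntegrand hω w) hslice]
  refine intervalIntegral.integral_congr fun t ht => ?_
  have hγ : c + t • (x - c) ∈ Ω := hΩ.prod_uIcc_subset_preimage (mk_mem_prod hx ht)
  have hΦ : DifferentiableAt ℝ (ω.interiorCLM w) (c + t • (x - c)) :=
    ((ω.contDiffOn_interiorCLM hω w).differentiableOn one_ne_zero).differentiableAt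
      (hΩo.mem_nhds hγ)
  have hpath : HasFDerivAt (fun y => c + t • (y - c)) (t • ContinuousLinearMap.id ℝ _) x :=
    (((hasFDerivAt_id x).sub_const c).const_smul t).const_add c
  have hderiv : HasFDerivAt (homotopyIntegrand c ω w · t) _ x :=
    ((hΦ.hasFDerivAt.comp x hpath).clm_apply ((hasFDerivAt_id x).sub_const c)).const_mul (t ^ m)
  rw [hderiv.fderiv]
  simp only [smul_apply, add_apply, ContinuousLinearMap.coe_comp, Function.comp_apply,
    ContinuousLinearMap.coe_id', id_eq, ContinuousLinearMap.flip_apply, FunLike.coe_smul,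
    Pi.smul_apply, map_smul, DForm.fderiv_interiorCLM_apply hΦ, DForm.interiorCLM_apply,
    smul_eq_mul]
  ring

theorem dOp_homotopyOperator (hΩo : IsOpen Ω) (hΩ : StarConvex ℝ c Ω)
    (hω : ∀ v, ContDiffOn ℝ 1 (fun x => fval ω x v) Ω)
    (hclosed : ∀ y ∈ Ω, ∀ v, dOp (fval ω) y v = 0) (hx : x ∈ Ω) (v : Fin (m + 1) → Fin n → ℝ) :
    dOp (fval (homotopyOperator c ω)) x v = fval ω x v := by
  have hDω : ∀ a h, ContinuousOn
      (fun t : ℝ => fderiv ℝ (fun z => fval ω z a) (c + t • (x - c)) h) (uIcc 0 1) :=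
    fun a h => (((hω a).continuousOn_fderiv_of_isOpen hΩo le_rfl).clm_apply
      continuousOn_const).comp_add_smul_sub hΩ hx
  simp only [dOp]
  simp_rw [fderiv_fval_homotopyOperator_apply hΩo hΩ hω hx, ← intervalIntegral.integral_const_mul]
  rw [← intervalIntegral.integral_finsetSum fun i _ => ?_,
    ← integral_pow_mul_fderiv_add_eq hΩo hΩ (hω v) hx m]
  · refine intervalIntegral.integral_congr fun t ht => ?_
    exact sum_neg_one_pow_mul_eq_of_dOp_cons_eq_zero
      (hclosed _ (hΩ.prod_uIcc_subset_preimage (mk_mem_prod hx ht)) _) _ _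
  · exact (continuousOn_const.mul (((continuousOn_pow _).mul (hDω _ _)).add
      ((continuousOn_pow _).mul ((hω _).continuousOn.comp_add_smul_sub hΩ hx)))).intervalIntegrable

end Forms

/-- **Poincaré lemma.** On a convex open set `Ω ⊆ ℝⁿ`, every smooth
closed `k`-form with `k ≥ 1` (here `k = m + 1`) is exact: there is a smooth
`(k−1)`-form `η` with `dη = ω` on `Ω`. -/
theorem poincare_lemma
    (n m : ℕ) (Ω : Set (Fin n → ℝ)) (hΩo : IsOpen Ω) (hΩc : Convex ℝ Ω)
    (ω : DForm n (m + 1))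
    (hsmooth : ∀ v : Fin (m + 1) → (Fin n → ℝ),
      ContDiffOn ℝ (⊤ : ℕ∞) (fun x => fval ω x v) Ω)
    (hclosed : ∀ x ∈ Ω, ∀ v : Fin (m + 2) → (Fin n → ℝ), dOp (fval ω) x v = 0) :
    ∃ η : DForm n m,
      (∀ v : Fin m → (Fin n → ℝ), ContDiffOn ℝ (⊤ : ℕ∞) (fun x => fval η x v) Ω) ∧
      ∀ x ∈ Ω, ∀ v : Fin (m + 1) → (Fin n → ℝ), dOp (fval η) x v = fval ω x v := by
  obtain ⟨c, hc⟩ : ∃ c, StarConvex ℝ c Ω := by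
    rcases Ω.eq_empty_or_nonempty with rfl | ⟨c, hc⟩
    exacts [⟨0, starConvex_empty 0⟩, ⟨c, hΩc.starConvex hc⟩]
  have hω : ∀ (k : ℕ) v, ContDiffOn ℝ k (fun x => fval ω x v) Ω := fun k v =>
    (hsmooth v).of_le (by exact_mod_cast le_top)
  refine ⟨homotopyOperator c ω, fun w => ?_, fun x hx v => ?_⟩
  · exact contDiffOn_infty.2 fun k => contDiffOn_homotopyOperator hΩo hc k (hω k) w
  · exact dOp_homotopyOperator hΩo hc (by exact_mod_cast hω 1) hclosed hx v
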